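/- arXiv:2204.02627 — 7 statements merged into one kernel-verified Lean document; each statement's English description precedes it below -/
import Mathlib

section
/- Let M1 be an m×n1 real matrix and M2 an m×n2 real matrix, and define the orthogonal projectors P1 = I - M1 M1⁺ and P2 = I - M2 M2⁺ (where ⁺ denotes the Moore–Penrose pseudoinverse). Then the pseudoinverse of the block matrix [M1 M2] equals the block matrix stacking (P2 M1)⁺ over (P1 M2)⁺ if and only if the column spaces of M1 and M2 intersect trivially, i.e., range(M1) ∩ range(M2) = {0}. -/
/-!
Write `P = 1 - M2 M2⁺`, `A = [M1 M2]`, `B = [Q1; Q2]` and `X = A B = M1 Q1 + M2 Q2`. As `Q1` is the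
pseudoinverse of `P M1` and `P` is an orthogonal projector killing `M2`, `Q1 P = Q1`, so `Q1 M2 = 0`;
likewise `Q2 M1 = 0`. If `v = M1 x = M2 y` lies in both ranges, then `X v = M1 Q1 M2 y + M2 Q2 M1 x = 0`,
whereas `A B A = A` gives `X v = v`. Conversely, `M1 Q1 M1 - M1` lies in the range of `M1` and is
killed by `P`, hence also lies in the range of `M2`, so it vanishes: `X` fixes `M1` and `M2`, which is
`A B A = A`. Then `B A = diag(Q1 P M1, Q2 P' M2)` is symmetric (`P' = 1 - M1 M1⁺`), and since `X`
fixes `P M1` and `P' M2`, whose column spaces contain the columns of `Q1ᵀ` and `Q2ᵀ`, `B Xᵀ = B`;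
this makes `X = X Xᵀ` symmetric and `B A B = B`.
-/

open Matrix

/-- `B` is the Moore–Penrose pseudoinverse of `A`. -/
def IsMoorePenrose {m n : Type*} [Fintype m] [Fintype n]
    (A : Matrix m n ℝ) (B : Matrix n m ℝ) : Prop :=
  A * B * A = A ∧ B * A * B = B ∧ (A * B)ᵀ = A * B ∧ (B * A)ᵀ = B * A

namespace IsMoorePenrose

variable {m n : Type*} [Fintype m] [Fintype n] {A : Matrix m n ℝ} {B : Matrix n m ℝ}

lemma eq_mul_transpose_mul_transpose (h : IsMoorePenrose A B) : B = B * Bᵀ * Aᵀ := by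
  conv_lhs => rw [← h.2.1]
  rw [Matrix.mul_assoc, ← h.2.2.1, transpose_mul, ← Matrix.mul_assoc]

lemma mul_transpose_eq_self (h : IsMoorePenrose A B) {Y : Matrix m m ℝ} (hY : Y * A = A) :
    B * Yᵀ = B := by
  conv_lhs => rw [h.eq_mul_transpose_mul_transpose]
  rw [Matrix.mul_assoc _ Aᵀ, ← transpose_mul, hY, ← h.eq_mul_transpose_mul_transpose]

end IsMoorePenrose

lemma isMoorePenrose_of_mul_transpose_eq_self {m n : Type*} [Fintype m] [Fintype n]
    {A : Matrix m n ℝ} {B : Matrix n m ℝ} (hABA : A * B * A = A) (hBA : (B * A)ᵀ = B * A)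
    (hB : B * (A * B)ᵀ = B) : IsMoorePenrose A B := by
  have hAB : A * B = A * B * (A * B)ᵀ := by
    conv_lhs => rw [← hB]
    rw [Matrix.mul_assoc]
  have hABsymm : (A * B)ᵀ = A * B := by
    rw [hAB, transpose_mul, transpose_transpose]
  refine ⟨hABA, ?_, hABsymm, hBA⟩
  rw [Matrix.mul_assoc, ← hABsymm, hB]

lemma range_inf_eq_bot_of_mul_eq_zero {m n k : Type*} [Fintype m] [Fintype n] [Fintype k]
    {M1 : Matrix m n ℝ} {M2 : Matrix m k ℝ} {Q1 : Matrix n m ℝ} {Q2 : Matrix k m ℝ}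
    (hQ1M2 : Q1 * M2 = 0) (hQ2M1 : Q2 * M1 = 0) (hX : (M1 * Q1 + M2 * Q2) * M1 = M1) :
    LinearMap.range M1.mulVecLin ⊓ LinearMap.range M2.mulVecLin = ⊥ := by
  refine (Submodule.eq_bot_iff _).2 fun v ⟨⟨x, hx⟩, ⟨y, hy⟩⟩ => ?_
  rw [mulVecLin_apply] at hx hy
  calc v = (M1 * Q1 + M2 * Q2) *ᵥ v := by rw [← hx, mulVec_mulVec, hX]
    _ = (M1 * Q1) *ᵥ (M2 *ᵥ y) + (M2 * Q2) *ᵥ (M1 *ᵥ x) := by rw [add_mulVec, hx, hy]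
    _ = 0 := by
      rw [mulVec_mulVec, mulVec_mulVec, Matrix.mul_assoc, Matrix.mul_assoc, hQ1M2, hQ2M1,
        Matrix.mul_zero, Matrix.mul_zero, zero_mulVec, zero_mulVec, add_zero]

section Projector

variable {m n k : Type*} [Fintype m] [Fintype k] [DecidableEq m]
  {M1 : Matrix m n ℝ} {M2 : Matrix m k ℝ} {M2p : Matrix k m ℝ} {Q1 : Matrix n m ℝ}

lemma one_sub_mul_mul_eq_zero (h : M2 * M2p * M2 = M2) : (1 - M2 * M2p) * M2 = 0 := by
  rw [Matrix.sub_mul, Matrix.one_mul, h, sub_self]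

lemma mul_one_sub_mul_eq_zero (h : M2p * M2 * M2p = M2p) : M2p * (1 - M2 * M2p) = 0 := by
  rw [Matrix.mul_sub, Matrix.mul_one, ← Matrix.mul_assoc, h, sub_self]

lemma mul_one_sub_mul_mul {Y : Matrix m m ℝ} (hY1 : Y * M1 = M1) (hY2 : Y * M2 = M2) :
    Y * ((1 - M2 * M2p) * M1) = (1 - M2 * M2p) * M1 := by
  rw [Matrix.sub_mul, Matrix.one_mul, Matrix.mul_sub, hY1, Matrix.mul_assoc M2,
    ← Matrix.mul_assoc, hY2]

variable [Fintype n]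

lemma pinv_mul_one_sub_mul (h2 : IsMoorePenrose M2 M2p)
    (hQ1 : IsMoorePenrose ((1 - M2 * M2p) * M1) Q1) : Q1 * (1 - M2 * M2p) = Q1 := by
  have hP : (1 - M2 * M2p) * ((1 - M2 * M2p) * M1) = (1 - M2 * M2p) * M1 := by
    rw [Matrix.sub_mul (1 : Matrix m m ℝ), Matrix.one_mul, Matrix.mul_assoc M2,
      ← Matrix.mul_assoc M2p, mul_one_sub_mul_eq_zero h2.2.1, Matrix.zero_mul,
      Matrix.mul_zero, sub_zero]
  simpa only [transpose_sub, transpose_one, h2.2.2.1] using hQ1.mul_transpose_eq_self hP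

lemma pinv_mul_eq_zero (h2 : IsMoorePenrose M2 M2p)
    (hQ1 : IsMoorePenrose ((1 - M2 * M2p) * M1) Q1) : Q1 * M2 = 0 := by
  rw [← pinv_mul_one_sub_mul h2 hQ1, Matrix.mul_assoc, one_sub_mul_mul_eq_zero h2.1,
    Matrix.mul_zero]

lemma pinv_mul_eq_pinv_mul_one_sub_mul_mul (h2 : IsMoorePenrose M2 M2p)
    (hQ1 : IsMoorePenrose ((1 - M2 * M2p) * M1) Q1) : Q1 * M1 = Q1 * ((1 - M2 * M2p) * M1) := by
  rw [← Matrix.mul_assoc, pinv_mul_one_sub_mul h2 hQ1]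

lemma mul_pinv_mul_of_range_inf_eq_bot (h2 : IsMoorePenrose M2 M2p)
    (hQ1 : IsMoorePenrose ((1 - M2 * M2p) * M1) Q1)
    (hbot : LinearMap.range M1.mulVecLin ⊓ LinearMap.range M2.mulVecLin = ⊥) :
    M1 * Q1 * M1 = M1 := by
  set D := M1 * Q1 * M1 - M1 with hD_def
  have hPD : (1 - M2 * M2p) * D = 0 := by
    rw [Matrix.mul_sub, Matrix.mul_assoc M1, pinv_mul_eq_pinv_mul_one_sub_mul_mul h2 hQ1,
      ← Matrix.mul_assoc _ M1, ← Matrix.mul_assoc _ Q1, hQ1.1, sub_self]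
  have hD : D = M2 * (M2p * D) := by
    rw [← Matrix.mul_assoc, ← sub_eq_zero, ← hPD, Matrix.sub_mul, Matrix.one_mul]
  suffices D = 0 from sub_eq_zero.1 this
  refine ext_iff_mulVec.2 fun v => ?_
  have hmem : D *ᵥ v ∈ LinearMap.range M1.mulVecLin ⊓ LinearMap.range M2.mulVecLin :=
    ⟨⟨Q1 *ᵥ (M1 *ᵥ v) - v, by
        simp [hD_def, sub_mulVec, mulVec_sub, mulVec_mulVec, Matrix.mul_assoc]⟩,
      ⟨(M2p * D) *ᵥ v, by rw [mulVecLin_apply, mulVec_mulVec, ← hD]⟩⟩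
  rw [hbot, Submodule.mem_bot] at hmem
  rw [hmem, zero_mulVec]

end Projector

theorem stmt_0 {m n1 n2 : ℕ}
    (M1 : Matrix (Fin m) (Fin n1) ℝ) (M2 : Matrix (Fin m) (Fin n2) ℝ)
    (M1p : Matrix (Fin n1) (Fin m) ℝ) (M2p : Matrix (Fin n2) (Fin m) ℝ)
    (h1 : IsMoorePenrose M1 M1p) (h2 : IsMoorePenrose M2 M2p)
    (Q1 : Matrix (Fin n1) (Fin m) ℝ) (Q2 : Matrix (Fin n2) (Fin m) ℝ)
    (hQ1 : IsMoorePenrose ((1 - M2 * M2p) * M1) Q1)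
    (hQ2 : IsMoorePenrose ((1 - M1 * M1p) * M2) Q2) :
    IsMoorePenrose (Matrix.fromCols M1 M2) (Matrix.fromRows Q1 Q2) ↔
      LinearMap.range M1.mulVecLin ⊓ LinearMap.range M2.mulVecLin = ⊥ := by
  have hQ1M2 := pinv_mul_eq_zero h2 hQ1
  have hQ2M1 := pinv_mul_eq_zero h1 hQ2
  have hABA : fromCols M1 M2 * fromRows Q1 Q2 * fromCols M1 M2 = fromCols M1 M2 ↔
      (M1 * Q1 + M2 * Q2) * M1 = M1 ∧ (M1 * Q1 + M2 * Q2) * M2 = M2 := by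
    rw [fromCols_mul_fromRows, mul_fromCols, fromCols_ext_iff]
  refine ⟨fun h => range_inf_eq_bot_of_mul_eq_zero hQ1M2 hQ2M1 (hABA.1 h.1).1, fun hbot => ?_⟩
  have hX1 : (M1 * Q1 + M2 * Q2) * M1 = M1 := by
    rw [Matrix.add_mul, mul_pinv_mul_of_range_inf_eq_bot h2 hQ1 hbot, Matrix.mul_assoc M2,
      hQ2M1, Matrix.mul_zero, add_zero]
  have hX2 : (M1 * Q1 + M2 * Q2) * M2 = M2 := by
    rw [Matrix.add_mul, mul_pinv_mul_of_range_inf_eq_bot h1 hQ2 ((inf_comm _ _).trans hbot),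
      Matrix.mul_assoc M1, hQ1M2, Matrix.mul_zero, zero_add]
  refine isMoorePenrose_of_mul_transpose_eq_self (hABA.2 ⟨hX1, hX2⟩) ?_ ?_
  · rw [fromRows_mul_fromCols, hQ1M2, hQ2M1, fromBlocks_transpose, transpose_zero, transpose_zero,
      pinv_mul_eq_pinv_mul_one_sub_mul_mul h2 hQ1, pinv_mul_eq_pinv_mul_one_sub_mul_mul h1 hQ2,
      hQ1.2.2.2, hQ2.2.2.2]
  · rw [fromCols_mul_fromRows, fromRows_mul,
      hQ1.mul_transpose_eq_self (mul_one_sub_mul_mul hX1 hX2),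
      hQ2.mul_transpose_eq_self (mul_one_sub_mul_mul hX2 hX1)]
end

section
/- If M1 and M2 are real matrices with the same number of rows such that range(M1) ∩ range(M2) = {0}, and P1 = I - M1 M1⁺, then (P1 M2)⁺ M1 = 0. -/
open Matrix

theorem stmt_1 {m n1 n2 : ℕ}
    (M1 : Matrix (Fin m) (Fin n1) ℝ) (M2 : Matrix (Fin m) (Fin n2) ℝ)
    (M1p : Matrix (Fin n1) (Fin m) ℝ)
    (h1 : IsMoorePenrose M1 M1p)
    (Q : Matrix (Fin n2) (Fin m) ℝ)
    (hQ : IsMoorePenrose ((1 - M1 * M1p) * M2) Q)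
    (hrange : LinearMap.range M1.mulVecLin ⊓ LinearMap.range M2.mulVecLin = ⊥) :
    Q * M1 = 0 := by
  obtain ⟨h11, h12, h13, h14⟩ := h1
  obtain ⟨q1, q2, q3, q4⟩ := hQ
  set A := (1 - M1 * M1p) * M2 with hA
  have hP1M1 : (1 - M1 * M1p) * M1 = 0 := by
    rw [Matrix.sub_mul, Matrix.one_mul, h11, sub_self]
  have hAT : Aᵀ * M1 = 0 := by
    rw [hA, transpose_mul, transpose_sub, transpose_one, h13, Matrix.mul_assoc, hP1M1,
      Matrix.mul_zero]
  calc Q * M1 = (Q * A * Q) * M1 := by rw [q2]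
    _ = Q * ((A * Q)ᵀ * M1) := by rw [q3]; simp only [Matrix.mul_assoc]
    _ = Q * (Qᵀ * (Aᵀ * M1)) := by rw [transpose_mul, Matrix.mul_assoc]
    _ = 0 := by rw [hAT, Matrix.mul_zero, Matrix.mul_zero]
end

section
/- Let ζ : ℝ≥0 → ℝ be continuously differentiable with ζ'(s) = η - ε c sin(ζ(s)) for constants η ≥ 1, ε ≥ 0, c ≥ 0. Then for all τ ≥ 0 and T > 0, |∫_τ^{τ+T} e^{i ζ(s)} ds| ≤ 2/η + ε c T / η ≤ 2 + ε c T. -/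
/-! Writing `η = ζ' + (η - ζ')`, the part `∫ ζ' e^{iζ}` integrates exactly to `-i e^{iζ}` and has
norm at most `2`, while `|η - ζ'| = εc |sin ζ| ≤ εc` bounds the rest by `εcT`; dividing by `η`
gives the estimate. -/

open Complex Set

theorem hasDerivAt_neg_I_mul_exp_I_mul {ζ : ℝ → ℝ} {ζ' s : ℝ} (hζ : HasDerivAt ζ ζ' s) :
    HasDerivAt (fun t => -I * exp (I * ζ t)) (ζ' * exp (I * ζ s)) s := by
  refine (((hζ.ofReal_comp.const_mul I).cexp).const_mul (-I)).congr_deriv ?_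
  linear_combination (-(ζ' * exp (I * ζ s))) * I_sq

theorem ContinuousOn.cexp_I_mul_ofReal {ζ : ℝ → ℝ} {S : Set ℝ} (hζ : ContinuousOn ζ S) :
    ContinuousOn (fun t => exp (I * ζ t)) S :=
  continuous_exp.comp_continuousOn ((continuous_ofReal.comp_continuousOn hζ).const_smul I)

theorem norm_integral_deriv_mul_exp_I_mul_le_two {ζ ζ' : ℝ → ℝ} {a b : ℝ}
    (hζ : ∀ s ∈ uIcc a b, HasDerivAt ζ (ζ' s) s) (hζ' : ContinuousOn ζ' (uIcc a b)) :
    ‖∫ s in a..b, (ζ' s : ℂ) * exp (I * ζ s)‖ ≤ 2 := by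
  have hζc : ContinuousOn ζ (uIcc a b) := fun s hs => (hζ s hs).continuousAt.continuousWithinAt
  have hint : IntervalIntegrable (fun s => (ζ' s : ℂ) * exp (I * ζ s)) MeasureTheory.volume a b :=
    ((continuous_ofReal.comp_continuousOn hζ').mul hζc.cexp_I_mul_ofReal).intervalIntegrable
  rw [intervalIntegral.integral_eq_sub_of_hasDerivAt
    (fun s hs => hasDerivAt_neg_I_mul_exp_I_mul (hζ s hs)) hint]
  calc ‖-I * exp (I * ζ b) - -I * exp (I * ζ a)‖
      ≤ ‖-I * exp (I * ζ b)‖ + ‖-I * exp (I * ζ a)‖ := norm_sub_le _ _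
    _ = 2 := by norm_num [norm_exp_I_mul_ofReal]

theorem mul_norm_integral_exp_I_mul_le {ζ ζ' : ℝ → ℝ} {a b η K : ℝ}
    (hζ : ∀ s ∈ uIcc a b, HasDerivAt ζ (ζ' s) s) (hζ' : ContinuousOn ζ' (uIcc a b))
    (hK : ∀ s ∈ uIcc a b, |η - ζ' s| ≤ K) :
    |η| * ‖∫ s in a..b, exp (I * ζ s)‖ ≤ 2 + K * |b - a| := by
  have hζc : ContinuousOn ζ (uIcc a b) := fun s hs => (hζ s hs).continuousAt.continuousWithinAt
  have hexp : ContinuousOn (fun s => exp (I * ζ s)) (uIcc a b) := hζc.cexp_I_mul_ofReal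
  have hsplit : (η : ℂ) * ∫ s in a..b, exp (I * ζ s) =
      (∫ s in a..b, (ζ' s : ℂ) * exp (I * ζ s)) +
        ∫ s in a..b, ((η - ζ' s : ℝ) : ℂ) * exp (I * ζ s) := by
    have h₁ : IntervalIntegrable (fun s => (ζ' s : ℂ) * exp (I * ζ s)) MeasureTheory.volume a b :=
      ((continuous_ofReal.comp_continuousOn hζ').mul hexp).intervalIntegrable
    have h₂ : IntervalIntegrable (fun s => ((η - ζ' s : ℝ) : ℂ) * exp (I * ζ s))
        MeasureTheory.volume a b :=
      ((continuous_ofReal.comp_continuousOn (continuousOn_const.sub hζ')).mul hexp).intervalIntegrable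
    rw [← intervalIntegral.integral_add h₁ h₂, ← intervalIntegral.integral_const_mul]
    refine intervalIntegral.integral_congr fun s _ => ?_
    push_cast
    ring
  have hrest : ‖∫ s in a..b, ((η - ζ' s : ℝ) : ℂ) * exp (I * ζ s)‖ ≤ K * |b - a| :=
    intervalIntegral.norm_integral_le_of_norm_le_const fun s hs => by
      rw [norm_mul, norm_exp_I_mul_ofReal, mul_one, norm_real, Real.norm_eq_abs]
      exact hK s (uIoc_subset_uIcc hs)
  calc |η| * ‖∫ s in a..b, exp (I * ζ s)‖ = ‖(η : ℂ) * ∫ s in a..b, exp (I * ζ s)‖ := by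
        rw [norm_mul, norm_real, Real.norm_eq_abs]
    _ ≤ 2 + K * |b - a| := by
        rw [hsplit]
        exact (norm_add_le _ _).trans
          (add_le_add (norm_integral_deriv_mul_exp_I_mul_le_two hζ hζ') hrest)

theorem stmt_3 (η ε c : ℝ) (hη : 1 ≤ η) (hε : 0 ≤ ε) (hc : 0 ≤ c)
    (ζ : ℝ → ℝ)
    (hζ : ∀ s, 0 ≤ s → HasDerivAt ζ (η - ε * c * Real.sin (ζ s)) s)
    (τ T : ℝ) (hτ : 0 ≤ τ) (hT : 0 < T) :
    ‖∫ s in τ..(τ + T), Complex.exp (Complex.I * (ζ s : ℂ))‖ ≤ 2 / η + ε * c * T / η ∧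
      2 / η + ε * c * T / η ≤ 2 + ε * c * T := by
  have hη0 : 0 < η := by linarith
  have hεc : 0 ≤ ε * c := mul_nonneg hε hc
  have hζI : ∀ s ∈ uIcc τ (τ + T), HasDerivAt ζ (η - ε * c * Real.sin (ζ s)) s := fun s hs =>
    hζ s (hτ.trans (uIcc_of_le (by linarith : τ ≤ τ + T) ▸ hs).1)
  have hζ' : ContinuousOn (fun s => η - ε * c * Real.sin (ζ s)) (uIcc τ (τ + T)) :=
    continuousOn_const.sub (continuousOn_const.mul (Real.continuous_sin.comp_continuousOn
      fun s hs => (hζI s hs).continuousAt.continuousWithinAt))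
  have hK : ∀ s ∈ uIcc τ (τ + T), |η - (η - ε * c * Real.sin (ζ s))| ≤ ε * c := fun s _ => by
    rw [sub_sub_cancel, abs_mul, abs_of_nonneg hεc]
    exact mul_le_of_le_one_right hεc (Real.abs_sin_le_one _)
  have hmain := mul_norm_integral_exp_I_mul_le hζI hζ' hK
  rw [abs_of_pos hη0, add_sub_cancel_left, abs_of_pos hT] at hmain
  refine ⟨?_, ?_⟩
  · rw [← add_div, le_div_iff₀ hη0, mul_comm]
    exact hmain
  · have htwo : 2 / η ≤ 2 := div_le_self zero_le_two hη
    have hεcT : ε * c * T / η ≤ ε * c * T := div_le_self (mul_nonneg hεc hT.le) hη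
    linarith
end

section
/- Let A : ℝ≥0 → ℝ^{n×n} be continuous and bounded with sup-norm bound ρ := sup_t ‖A(t)‖ < ∞, and let Aav ∈ ℝ^{n×n}. Let Φ(t+T, t) denote the state transition matrix of the system x' = ε A(t) x and Φav(t+T,t) = exp(ε T Aav). Then ‖Φ(t+T,t) - Φav(t+T,t)‖ ≤ ε ‖∫_t^{t+T} (A(s) - Aav) ds‖ + (e^{ρεT} - 1 - ρεT) + (e^{εT‖Aav‖} - 1 - εT‖Aav‖) for all t, T ≥ 0 and ε ≥ 0. -/
open Matrix NormedSpace
open scoped Matrix.Norms.L2Operator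

/-! The transition matrix `u ↦ Φ u t` and `u ↦ exp (u • x)` both solve linear equations
`Y' = B Y` with `Y a = 1` and `‖B‖ ≤ c`. For such a solution the successive remainders of the Picard
expansion are dominated by those of `e^{c(u-a)}`: `‖Y u‖ ≤ e^{c(u-a)}`, then
`‖Y u - 1‖ ≤ e^{c(u-a)} - 1`, then `‖Y u - 1 - ∫ₐᵘ B‖ ≤ e^{c(u-a)} - 1 - c(u-a)`, each step by
comparing the derivative of the left side with that of the right side. Subtracting the first-order
expansions of `Φ` and of `exp ((ε * T) • Aav)` leaves `ε ∫ (A - Aav)` plus the two second-order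
remainders. -/

theorem hasDerivAt_exp_mul_sub (c a x : ℝ) :
    HasDerivAt (fun u => Real.exp (c * (u - a))) (c * Real.exp (c * (x - a))) x := by
  simpa [mul_comm] using (((hasDerivAt_id x).sub_const a).const_mul c).exp

section LinearODE

variable {E : Type*} [NormedRing E] [NormedAlgebra ℝ E] {B Y : ℝ → E} {a b c : ℝ}

theorem norm_le_mul_exp_of_hasDerivAt_mul (hB : ∀ s, ‖B s‖ ≤ c)
    (hY : ∀ u, HasDerivAt Y (B u * Y u) u) (hab : a ≤ b) :
    ‖Y b‖ ≤ ‖Y a‖ * Real.exp (c * (b - a)) := by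
  have hYc : Continuous Y := continuous_iff_continuousAt.2 fun u => (hY u).continuousAt
  have := norm_le_gronwallBound_of_norm_deriv_right_le (δ := ‖Y a‖) (ε := 0)
    hYc.continuousOn (fun x _ => (hY x).hasDerivWithinAt) le_rfl
    (fun x _ => by simpa using norm_mul_le_of_le (hB x) le_rfl) b ⟨hab, le_rfl⟩
  rwa [gronwallBound_ε0] at this

theorem norm_sub_le_mul_exp_sub_one_of_hasDerivAt_mul (hB : ∀ s, ‖B s‖ ≤ c)
    (hY : ∀ u, HasDerivAt Y (B u * Y u) u) (hab : a ≤ b) :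
    ‖Y b - Y a‖ ≤ ‖Y a‖ * (Real.exp (c * (b - a)) - 1) := by
  have hYc : Continuous Y := continuous_iff_continuousAt.2 fun u => (hY u).continuousAt
  refine image_norm_le_of_norm_deriv_right_le_deriv_boundary (f := fun u => Y u - Y a)
    (B' := fun x => ‖Y a‖ * (c * Real.exp (c * (x - a))))
    (hYc.sub continuous_const).continuousOn (fun x _ => ((hY x).sub_const _).hasDerivWithinAt)
    (by simp) (fun x => ((hasDerivAt_exp_mul_sub c a x).sub_const 1).const_mul _)
    (fun x hx => ?_) ⟨hab, le_rfl⟩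
  calc ‖B x * Y x‖ ≤ c * (‖Y a‖ * Real.exp (c * (x - a))) :=
        norm_mul_le_of_le (hB x) (norm_le_mul_exp_of_hasDerivAt_mul hB hY hx.1)
    _ = ‖Y a‖ * (c * Real.exp (c * (x - a))) := by ring

variable [CompleteSpace E]

theorem norm_sub_sub_integral_mul_le_of_hasDerivAt_mul (hBc : Continuous B)
    (hB : ∀ s, ‖B s‖ ≤ c) (hY : ∀ u, HasDerivAt Y (B u * Y u) u) (hab : a ≤ b) :
    ‖Y b - Y a - (∫ s in a..b, B s) * Y a‖ ≤
      ‖Y a‖ * (Real.exp (c * (b - a)) - 1 - c * (b - a)) := by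
  have hderiv : ∀ x, HasDerivAt (fun u => Y u - Y a - (∫ s in a..u, B s) * Y a)
      (B x * (Y x - Y a)) x := fun x => by
    simpa [mul_sub] using ((hY x).sub_const (Y a)).fun_sub
      ((hBc.integral_hasStrictDerivAt a x).hasDerivAt.mul_const (Y a))
  refine image_norm_le_of_norm_deriv_right_le_deriv_boundary
    (f := fun u => Y u - Y a - (∫ s in a..u, B s) * Y a)
    (B := fun x => ‖Y a‖ * (Real.exp (c * (x - a)) - 1 - c * (x - a)))
    (B' := fun x => ‖Y a‖ * (c * Real.exp (c * (x - a)) - c))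
    (fun x _ => (hderiv x).continuousAt.continuousWithinAt)
    (fun x _ => (hderiv x).hasDerivWithinAt)
    (by simp) (fun x => by
      simpa [mul_sub] using
        ((((hasDerivAt_exp_mul_sub c a x).sub_const 1).sub
          (((hasDerivAt_id x).sub_const a).const_mul c)).const_mul ‖Y a‖))
    (fun x hx => ?_) ⟨hab, le_rfl⟩
  calc ‖B x * (Y x - Y a)‖ ≤ c * (‖Y a‖ * (Real.exp (c * (x - a)) - 1)) :=
        norm_mul_le_of_le (hB x) (norm_sub_le_mul_exp_sub_one_of_hasDerivAt_mul hB hY hx.1)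
    _ = ‖Y a‖ * (c * Real.exp (c * (x - a)) - c) := by ring

theorem norm_sub_one_sub_integral_le_of_hasDerivAt_mul (hBc : Continuous B)
    (hB : ∀ s, ‖B s‖ ≤ c) (hY : ∀ u, HasDerivAt Y (B u * Y u) u) (hab : a ≤ b)
    (hYa : Y a = 1) (hone : ‖(1 : E)‖ ≤ 1) :
    ‖Y b - 1 - ∫ s in a..b, B s‖ ≤ Real.exp (c * (b - a)) - 1 - c * (b - a) := by
  have h := norm_sub_sub_integral_mul_le_of_hasDerivAt_mul hBc hB hY hab
  rw [hYa, mul_one] at h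
  exact h.trans (mul_le_of_le_one_left (by linarith [Real.add_one_le_exp (c * (b - a))]) hone)

theorem norm_exp_sub_one_sub_le (hone : ‖(1 : E)‖ ≤ 1) (x : E) :
    ‖exp x - 1 - x‖ ≤ Real.exp ‖x‖ - 1 - ‖x‖ := by
  have h := norm_sub_one_sub_integral_le_of_hasDerivAt_mul (B := fun _ => x)
    (Y := fun u : ℝ => exp (u • x)) continuous_const (fun _ => le_rfl)
    (fun u => hasDerivAt_exp_smul_const' x u) zero_le_one (by simp) hone
  simpa using h

end LinearODE

theorem Matrix.l2_opNorm_one_le {n : ℕ} : ‖(1 : Matrix (Fin n) (Fin n) ℝ)‖ ≤ 1 := by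
  rw [Matrix.cstar_norm_def, _root_.map_one]
  exact ContinuousLinearMap.norm_id_le

theorem stmt_4 {n : ℕ}
    (A : ℝ → Matrix (Fin n) (Fin n) ℝ) (Aav : Matrix (Fin n) (Fin n) ℝ)
    (ρ : ℝ) (hA : Continuous A) (hbound : ∀ t, ‖A t‖ ≤ ρ)
    (ε : ℝ) (hε : 0 ≤ ε)
    (Φ : ℝ → ℝ → Matrix (Fin n) (Fin n) ℝ)
    (hΦinit : ∀ t0, Φ t0 t0 = 1)
    (hΦode : ∀ t0 τ, HasDerivAt (fun u => Φ u t0) (ε • (A τ * Φ τ t0)) τ) :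
    ∀ t T : ℝ, 0 ≤ t → 0 ≤ T →
      ‖Φ (t + T) t - exp ((ε * T) • Aav)‖ ≤
        ε * ‖∫ s in t..(t + T), (A s - Aav)‖ +
          (Real.exp (ρ * ε * T) - 1 - ρ * ε * T) +
          (Real.exp (ε * T * ‖Aav‖) - 1 - ε * T * ‖Aav‖) := by
  intro t T _ hT
  have htT : t ≤ t + T := le_add_of_nonneg_right hT
  have hΦ : ‖Φ (t + T) t - 1 - ε • ∫ s in t..(t + T), A s‖ ≤
      Real.exp (ρ * ε * T) - 1 - ρ * ε * T := by
    have hεA : ∀ s, ‖ε • A s‖ ≤ ρ * ε := fun s => by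
      rw [norm_smul, Real.norm_of_nonneg hε, mul_comm ρ]; gcongr; exact hbound s
    have h := norm_sub_one_sub_integral_le_of_hasDerivAt_mul (B := fun s => ε • A s)
      (Y := fun u => Φ u t) (hA.const_smul ε) hεA
      (fun u => by simpa only [smul_mul_assoc] using hΦode t u) htT (hΦinit t)
      Matrix.l2_opNorm_one_le
    rwa [intervalIntegral.integral_smul, add_sub_cancel_left] at h
  have hΦav := norm_exp_sub_one_sub_le Matrix.l2_opNorm_one_le ((ε * T) • Aav)
  rw [norm_smul, Real.norm_of_nonneg (mul_nonneg hε hT)] at hΦav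
  have hsplit : Φ (t + T) t - exp ((ε * T) • Aav) =
      (Φ (t + T) t - 1 - ε • ∫ s in t..(t + T), A s) - (exp ((ε * T) • Aav) - 1 - (ε * T) • Aav)
        + ε • ∫ s in t..(t + T), (A s - Aav) := by
    rw [intervalIntegral.integral_sub (hA.intervalIntegrable _ _) intervalIntegrable_const,
      intervalIntegral.integral_const, add_sub_cancel_left, smul_sub, smul_smul]
    abel
  rw [hsplit]
  calc _ ≤ ‖_ - _‖ + ‖_‖ := norm_add_le _ _
    _ ≤ ‖_‖ + ‖_‖ + ‖_‖ := by gcongr; exact norm_sub_le _ _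
    _ ≤ _ := by rw [norm_smul, Real.norm_of_nonneg hε]; linarith
end

section
/- Let A : ℝ≥0 → ℝ^{n×n} be continuous, bounded, and pointwise commuting in the sense that A(τ) ∫_σ^τ A(s) ds = (∫_σ^τ A(s) ds) A(τ) for all σ, τ ≥ 0. Then the state transition matrix of x' = A(t)x satisfies Φ(τ, σ) = exp(∫_σ^τ A(s) ds). -/
open Matrix NormedSpace
open scoped Matrix.Norms.L2Operator

/-!
Write `B(v) = ∫_σ^v A`. Differentiating the hypothesis `A τ * B = B * A τ` in the lower endpoint
shows that the values `A s`, `s ≥ 0`, commute pairwise, hence so do all the `B(v)`, `v ≥ 0`.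
Then `exp (-B w) = exp (-B v) * exp (-(B w - B v))` for `v, w ≥ 0`, which gives
`d/dv exp (-B v) = -exp (-B v) * A v` on `[0, ∞)`, so `exp (-B v) * Φ v σ` has zero derivative
there. It is therefore constant, equal to its value `1` at `v = σ`.
-/

open Set

section BanachAlgebra

variable {𝔸 : Type*} [NormedRing 𝔸] [NormedAlgebra ℝ 𝔸] [CompleteSpace 𝔸]

theorem Commute.intervalIntegral_right {f : ℝ → 𝔸} {M : 𝔸} {a b : ℝ}
    (h : ∀ x ∈ uIcc a b, Commute M (f x)) : Commute M (∫ x in a..b, f x) := by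
  by_cases hf : IntervalIntegrable f MeasureTheory.volume a b
  · have hleft : M * ∫ x in a..b, f x = ∫ x in a..b, M * f x :=
      ((ContinuousLinearMap.mul ℝ 𝔸 M).intervalIntegral_comp_comm hf).symm
    have hright : (∫ x in a..b, f x) * M = ∫ x in a..b, f x * M :=
      (((ContinuousLinearMap.mul ℝ 𝔸).flip M).intervalIntegral_comp_comm hf).symm
    change M * _ = _ * M
    rw [hleft, hright]
    exact intervalIntegral.integral_congr h
  · rw [intervalIntegral.integral_undef hf]
    exact Commute.zero_right M

theorem Commute.intervalIntegral_intervalIntegral {f g : ℝ → 𝔸} {a b c d : ℝ}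
    (h : ∀ x ∈ uIcc a b, ∀ y ∈ uIcc c d, Commute (f x) (g y)) :
    Commute (∫ x in a..b, f x) (∫ y in c..d, g y) :=
  Commute.intervalIntegral_right fun y hy =>
    (Commute.intervalIntegral_right fun x hx => (h x hx y hy).symm).symm

theorem commute_of_forall_commute_intervalIntegral {A : ℝ → 𝔸} (hA : Continuous A)
    {S : Set ℝ} (hS : UniqueDiffOn ℝ S) {M : 𝔸} {b : ℝ}
    (h : ∀ σ ∈ S, Commute M (∫ s in σ..b, A s)) {σ : ℝ} (hσ : σ ∈ S) : Commute M (A σ) := by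
  set C := fun u => M * (∫ s in u..b, A s) - (∫ s in u..b, A s) * M
  have hI : HasDerivAt (fun u => ∫ s in u..b, A s) (-A σ) σ :=
    intervalIntegral.integral_hasDerivAt_left (hA.intervalIntegrable _ _)
      hA.stronglyMeasurable.stronglyMeasurableAtFilter hA.continuousAt
  have hC : HasDerivWithinAt C (M * -A σ - -A σ * M) S σ :=
    ((hI.const_mul M).sub (hI.mul_const M)).hasDerivWithinAt
  have hC_zero : HasDerivWithinAt C 0 S σ :=
    (hasDerivWithinAt_const σ S 0).congr (fun u hu => sub_eq_zero.2 (h u hu))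
      (sub_eq_zero.2 (h σ hσ))
  have hderiv : M * -A σ - -A σ * M = 0 := (hS σ hσ).eq_deriv _ hC hC_zero
  rw [mul_neg, neg_mul, sub_neg_eq_add, neg_add_eq_zero] at hderiv
  exact hderiv

theorem hasDerivWithinAt_exp_of_commute {B : ℝ → 𝔸} {b : 𝔸} {s : Set ℝ} {u : ℝ}
    (hB : HasDerivWithinAt B b s u) (hc : ∀ v ∈ s, Commute (B u) (B v)) :
    HasDerivWithinAt (fun v => exp (B v)) (exp (B u) * b) s u := by
  let : NormedAlgebra ℚ 𝔸 := NormedAlgebra.restrictScalars ℚ ℝ 𝔸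
  have hsplit : ∀ v ∈ s, exp (B v) = exp (B u) * exp (B v - B u) := fun v hv => by
    rw [← exp_add_of_commute ((hc v hv).sub_right (Commute.refl _)), add_sub_cancel]
  have hexp : HasFDerivAt exp (1 : 𝔸 →L[ℝ] 𝔸) (B u - B u) := by
    rw [sub_self]
    exact hasFDerivAt_exp_zero
  have hΔ : HasDerivWithinAt (fun v => exp (B v - B u)) b s u := by
    have := hexp.comp_hasDerivWithinAt u (hB.sub_const (B u))
    rwa [one_apply_eq_self] at this
  exact (hΔ.const_mul (exp (B u))).congr hsplit (by rw [sub_self, exp_zero, mul_one])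

theorem hasDerivWithinAt_exp_neg_intervalIntegral {A : ℝ → 𝔸} (hA : Continuous A)
    {S : Set ℝ} (hS : Convex ℝ S) (hAA : ∀ x ∈ S, ∀ y ∈ S, Commute (A x) (A y))
    {σ u : ℝ} (hσ : σ ∈ S) (hu : u ∈ S) :
    HasDerivWithinAt (fun v => exp (-∫ s in σ..v, A s)) (exp (-∫ s in σ..u, A s) * -A u) S u :=
  hasDerivWithinAt_exp_of_commute
    (intervalIntegral.integral_hasDerivAt_right (hA.intervalIntegrable _ _)
      hA.stronglyMeasurable.stronglyMeasurableAtFilter hA.continuousAt).neg.hasDerivWithinAt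
    fun _ hv => (Commute.intervalIntegral_intervalIntegral fun x hx y hy =>
      hAA x (hS.ordConnected.uIcc_subset hσ hu hx) y
        (hS.ordConnected.uIcc_subset hσ hv hy)).neg_left.neg_right

theorem eq_exp_intervalIntegral_of_hasDerivWithinAt {A Φ : ℝ → 𝔸} (hA : Continuous A)
    {S : Set ℝ} (hS : Convex ℝ S) (hAA : ∀ x ∈ S, ∀ y ∈ S, Commute (A x) (A y))
    {σ : ℝ} (hσ : σ ∈ S) (hΦσ : Φ σ = 1)
    (hΦ : ∀ u ∈ S, HasDerivWithinAt Φ (A u * Φ u) S u) {τ : ℝ} (hτ : τ ∈ S) :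
    Φ τ = exp (∫ s in σ..τ, A s) := by
  let : NormedAlgebra ℚ 𝔸 := NormedAlgebra.restrictScalars ℚ ℝ 𝔸
  set g := fun v => exp (-∫ s in σ..v, A s) * Φ v
  have hg : ∀ u ∈ S, HasDerivWithinAt g 0 S u := fun u hu => by
    have hprod := (hasDerivWithinAt_exp_neg_intervalIntegral hA hS hAA hσ hu).mul (hΦ u hu)
    rwa [mul_neg, neg_mul, ← mul_assoc, neg_add_cancel] at hprod
  have hgτ : g τ = 1 := by
    have := hS.norm_image_sub_le_of_norm_hasDerivWithin_le hg (fun _ _ => norm_zero.le) hσ hτ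
    simpa [g, hΦσ, sub_eq_zero] using this
  have hinv : exp (∫ s in σ..τ, A s) * exp (-∫ s in σ..τ, A s) = 1 := by
    rw [← NormedSpace.exp_add_of_commute (Commute.neg_right (Commute.refl _)), add_neg_cancel,
      exp_zero]
  calc Φ τ = exp (∫ s in σ..τ, A s) * g τ := by rw [← mul_assoc, hinv, one_mul]
    _ = exp (∫ s in σ..τ, A s) := by rw [hgτ, mul_one]

end BanachAlgebra

theorem stmt_6_general {n : ℕ}
    (A : ℝ → Matrix (Fin n) (Fin n) ℝ)
    (hA : Continuous A)
    (hcomm : ∀ σ τ : ℝ, 0 ≤ σ → 0 ≤ τ →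
      A τ * (∫ s in σ..τ, A s) = (∫ s in σ..τ, A s) * A τ)
    (Φ : ℝ → ℝ → Matrix (Fin n) (Fin n) ℝ)
    (hΦinit : ∀ σ, Φ σ σ = 1)
    (hΦode : ∀ σ τ, HasDerivAt (fun u => Φ u σ) (A τ * Φ τ σ) τ) :
    ∀ σ τ : ℝ, 0 ≤ σ → 0 ≤ τ → Φ τ σ = exp (∫ s in σ..τ, A s) := by
  intro σ τ hσ hτ
  have hAA : ∀ x ∈ Ici (0 : ℝ), ∀ y ∈ Ici (0 : ℝ), Commute (A x) (A y) := fun x hx y hy =>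
    (commute_of_forall_commute_intervalIntegral hA (uniqueDiffOn_Ici 0)
      (fun σ' hσ' => hcomm σ' y hσ' hy) hx).symm
  exact eq_exp_intervalIntegral_of_hasDerivWithinAt (Φ := fun u => Φ u σ) hA (convex_Ici 0) hAA
    hσ (hΦinit σ) (fun u _ => (hΦode σ u).hasDerivWithinAt) hτ

theorem stmt_6 {n : ℕ}
    (A : ℝ → Matrix (Fin n) (Fin n) ℝ)
    (hA : Continuous A) (C : ℝ) (hbound : ∀ t, 0 ≤ t → ‖A t‖ ≤ C)
    (hcomm : ∀ σ τ : ℝ, 0 ≤ σ → 0 ≤ τ →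
      A τ * (∫ s in σ..τ, A s) = (∫ s in σ..τ, A s) * A τ)
    (Φ : ℝ → ℝ → Matrix (Fin n) (Fin n) ℝ)
    (hΦinit : ∀ σ, Φ σ σ = 1)
    (hΦode : ∀ σ τ, HasDerivAt (fun u => Φ u σ) (A τ * Φ τ σ) τ) :
    ∀ σ τ : ℝ, 0 ≤ σ → 0 ≤ τ → Φ τ σ = exp (∫ s in σ..τ, A s) :=
  stmt_6_general A hA hcomm Φ hΦinit hΦode
end

section
/- Let ζ : ℝ≥0 → ℝ^m be continuously differentiable with ζ(τ) = z0 + ητ - ε Ψ ∫_0^τ sin(ζ(r)) dr (componentwise sine), where η ∈ ℝ^m has all entries with absolute value at least 1 and Ψ ∈ ℝ^{m×m}. Then for all τ ≥ 0 and T > 0, the componentwise bound ‖(1/T) ∫_τ^{τ+T} cos(ζ(s)) ds‖_∞ ≤ 2/T + ε ‖Ψ‖_∞ holds. -/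
/-! Componentwise, `ζᵢ' = ηᵢ - ε (Ψ sin ζ)ᵢ`. Hence
`ηᵢ ∫ cos ζᵢ = ∫ cos ζᵢ · ζᵢ' + ε ∫ cos ζᵢ · (Ψ sin ζ)ᵢ = [sin ζᵢ] + ε ∫ cos ζᵢ · (Ψ sin ζ)ᵢ`,
the boundary term is at most `2` and the remaining integrand at most `ε ‖Ψ‖` in absolute value;
dividing by `|ηᵢ| ≥ 1` and by `T` gives the bound. -/

open Matrix Real Set intervalIntegral MeasureTheory

attribute [local instance] Matrix.linftyOpNormedAddCommGroup

theorem abs_integral_cos_le_of_hasDerivAt {θ f : ℝ → ℝ} {a b c K : ℝ} (hab : a ≤ b)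
    (hc : 1 ≤ |c|) (hθ : ∀ s ∈ uIcc a b, HasDerivAt θ (c - f s) s)
    (hf : IntervalIntegrable f volume a b) (hfK : ∀ s, |f s| ≤ K) :
    |∫ s in a..b, cos (θ s)| ≤ 2 + K * (b - a) := by
  have hcosθ : ContinuousOn (fun s => cos (θ s)) (uIcc a b) :=
    continuous_cos.comp_continuousOn fun s hs => (hθ s hs).continuousAt.continuousWithinAt
  have hcosθf : IntervalIntegrable (fun s => cos (θ s) * f s) volume a b :=
    hf.continuousOn_mul hcosθ
  have hdrift : IntervalIntegrable (fun s => cos (θ s) * (c - f s)) volume a b :=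
    (intervalIntegrable_const.sub hf).continuousOn_mul hcosθ
  have hFTC : ∫ s in a..b, cos (θ s) * (c - f s) = sin (θ b) - sin (θ a) :=
    integral_eq_sub_of_hasDerivAt (fun s hs => (hθ s hs).sin) hdrift
  have hsplit : c * ∫ s in a..b, cos (θ s) =
      (sin (θ b) - sin (θ a)) + ∫ s in a..b, cos (θ s) * f s := by
    rw [← hFTC, ← intervalIntegral.integral_const_mul, ← integral_add hdrift hcosθf]
    exact integral_congr fun s _ => by ring
  have hboundary : |sin (θ b) - sin (θ a)| ≤ 2 := by
    linarith [abs_sub (sin (θ b)) (sin (θ a)), abs_sin_le_one (θ a), abs_sin_le_one (θ b)]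
  have hremainder : |∫ s in a..b, cos (θ s) * f s| ≤ K * (b - a) := by
    have := norm_integral_le_of_norm_le_const (a := a) (b := b) (f := fun s => cos (θ s) * f s)
      fun s _ => by
        rw [norm_mul]
        exact (mul_le_of_le_one_left (abs_nonneg _) (abs_cos_le_one _)).trans (hfK s)
    rwa [abs_of_nonneg (sub_nonneg.2 hab)] at this
  calc |∫ s in a..b, cos (θ s)| ≤ |c| * |∫ s in a..b, cos (θ s)| :=
        le_mul_of_one_le_left (abs_nonneg _) hc
    _ = |(sin (θ b) - sin (θ a)) + ∫ s in a..b, cos (θ s) * f s| := by rw [← abs_mul, hsplit]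
    _ ≤ 2 + K * (b - a) := (abs_add_le _ _).trans (add_le_add hboundary hremainder)

theorem intervalIntegral_pi_apply {ι : Type*} [Fintype ι] {f : ℝ → ι → ℝ} {a b : ℝ}
    (hf : IntervalIntegrable f volume a b) (i : ι) :
    (∫ s in a..b, f s) i = ∫ s in a..b, f s i :=
  ((ContinuousLinearMap.proj (R := ℝ) (φ := fun _ : ι => ℝ) i).intervalIntegral_comp_comm hf).symm

theorem norm_integral_cos_le_of_hasDerivAt {ι : Type*} [Fintype ι] {ζ f : ℝ → ι → ℝ}
    {η : ι → ℝ} {a b K : ℝ} (hab : a ≤ b) (hη : ∀ i, 1 ≤ |η i|)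
    (hζ : ∀ s ∈ uIcc a b, HasDerivAt ζ (η - f s) s) (hf : Continuous f) (hfK : ∀ s, ‖f s‖ ≤ K) :
    ‖∫ s in a..b, fun i => cos (ζ s i)‖ ≤ 2 + K * (b - a) := by
  have hK : 0 ≤ K := (norm_nonneg _).trans (hfK 0)
  have hcosζ : ContinuousOn (fun s i => cos (ζ s i)) (uIcc a b) :=
    continuousOn_pi.2 fun i => continuous_cos.comp_continuousOn <|
      (continuous_apply i).comp_continuousOn fun s hs => (hζ s hs).continuousAt.continuousWithinAt
  refine (pi_norm_le_iff_of_nonneg (by nlinarith)).2 fun i => ?_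
  rw [intervalIntegral_pi_apply hcosζ.intervalIntegrable, norm_eq_abs]
  exact abs_integral_cos_le_of_hasDerivAt hab (hη i)
    (fun s hs => hasDerivAt_pi.1 (hζ s hs) i) (((continuous_apply i).comp hf).intervalIntegrable _ _)
    fun s => (norm_le_pi_norm (f s) i).trans (hfK s)

theorem hasDerivAt_add_smul_sub_smul_mulVec_integral {ι : Type*} [Fintype ι]
    (z0 η : ι → ℝ) (ε : ℝ) (Ψ : Matrix ι ι ℝ) {w : ℝ → ι → ℝ} (hw : Continuous w) (s : ℝ) :
    HasDerivAt (fun t => z0 + t • η - ε • Ψ *ᵥ ∫ r in (0 : ℝ)..t, w r)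
      (η - ε • Ψ *ᵥ w s) s := by
  have hΨv : HasDerivAt (fun t => Ψ *ᵥ ∫ r in (0 : ℝ)..t, w r) (Ψ *ᵥ w s) s :=
    (Ψ.mulVecLin.toContinuousLinearMap.hasFDerivAt.comp_hasDerivAt s
      (hw.integral_hasStrictDerivAt 0 s).hasDerivAt :)
  have hline := ((hasDerivAt_id' s).smul_const η).const_add z0
  rw [one_smul] at hline
  exact hline.sub (hΨv.fun_const_smul ε)

theorem norm_mulVec_sin_le {ι κ : Type*} [Fintype ι] [Fintype κ] (Ψ : Matrix ι κ ℝ)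
    (x : κ → ℝ) : ‖Ψ *ᵥ fun j => sin (x j)‖ ≤ ‖Ψ‖ := by
  have hsin : ‖fun j => sin (x j)‖ ≤ 1 :=
    (pi_norm_le_iff_of_nonneg zero_le_one).2 fun j => abs_sin_le_one (x j)
  simpa using (linfty_opNorm_mulVec Ψ _).trans (mul_le_of_le_one_right (norm_nonneg Ψ) hsin)

theorem stmt_16 {m : ℕ}
    (z0 η : Fin m → ℝ) (hη : ∀ i, 1 ≤ |η i|)
    (ε : ℝ) (hε : 0 ≤ ε) (Ψ : Matrix (Fin m) (Fin m) ℝ)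
    (ζ : ℝ → (Fin m → ℝ)) (hζ : Continuous ζ)
    (hint : ∀ τ : ℝ, 0 ≤ τ →
      ζ τ = z0 + τ • η - ε • Ψ.mulVec (∫ r in (0 : ℝ)..τ, fun i => Real.sin (ζ r i))) :
    ∀ τ T : ℝ, 0 ≤ τ → 0 < T →
      ‖(1 / T) • ∫ s in τ..(τ + T), (fun i => Real.cos (ζ s i) : Fin m → ℝ)‖
        ≤ 2 / T + ε * ‖Ψ‖ := by
  intro τ T hτ hT
  set w : ℝ → Fin m → ℝ := fun s i => sin (ζ s i)
  have hw : Continuous w := by fun_prop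
  -- `g` extends `ζ|_{[0,∞)}` to a function differentiable on all of `ℝ`.
  set g : ℝ → Fin m → ℝ := fun t => z0 + t • η - ε • Ψ *ᵥ ∫ r in (0 : ℝ)..t, w r
  have hζg : ∫ s in τ..(τ + T), (fun i => cos (ζ s i)) = ∫ s in τ..(τ + T), fun i => cos (g s i) :=
    integral_congr fun s hs => by
      rw [uIcc_of_le (by linarith)] at hs
      simp only [hint s (hτ.trans hs.1), g]
  have hbound : ‖∫ s in τ..(τ + T), fun i => cos (g s i)‖ ≤ 2 + ε * ‖Ψ‖ * (τ + T - τ) :=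
    norm_integral_cos_le_of_hasDerivAt (by linarith) hη
      (fun s _ => hasDerivAt_add_smul_sub_smul_mulVec_integral z0 η ε Ψ hw s) (by fun_prop)
      fun s => by
        rw [norm_smul, norm_of_nonneg hε]
        exact mul_le_mul_of_nonneg_left (norm_mulVec_sin_le Ψ (ζ s)) hε
  rw [add_sub_cancel_left] at hbound
  rw [hζg, norm_smul, norm_of_nonneg (by positivity)]
  calc 1 / T * ‖∫ s in τ..(τ + T), fun i => cos (g s i)‖ ≤ 1 / T * (2 + ε * ‖Ψ‖ * T) := by
        gcongr
    _ = 2 / T + ε * ‖Ψ‖ := by field_simp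
end

section
/- Let h0, p : ℝ≥0 × ℝ^n → ℝ^n be continuous, suppose the unperturbed system x' = h0(t,x) admits a continuously differentiable Lyapunov function V with c1‖x‖² ≤ V(t,x) ≤ c2‖x‖², ∂V/∂t + (∂V/∂x)·h0(t,x) ≤ -c3‖x‖², and ‖∂V/∂x‖ ≤ c4‖x‖ for ‖x‖ < d, and suppose ‖p(t,x)‖ ≤ δ̄ for all t and ‖x‖ < d, where δ̄ < (c3/c4)√(c1/c2) d. Then every solution of the perturbed system x' = h0(t,x) + p(t,x) with ‖x(0)‖ < √(c1/c2) d satisfies limsup_{t→∞} ‖x(t)‖ ≤ (c4/c3)√(c2/c1) δ̄; in particular there exists T > 0 such that ‖x(t)‖ < (c4/c3)√(c2/c1) δ̄ + ρ' for all t ≥ T and any ρ' > 0. -/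
/-!
Along a solution `x`, the function `W t = V t (x t)` satisfies
`W' ≤ -c₃‖x‖² + c₄ δ̄ ‖x‖ = -c₃ ‖x‖ (‖x‖ - μ)` with `μ = c₄ δ̄ / c₃`, as long as `‖x‖ < d`.
Hence every sublevel set `{W ≤ c₂ ν²}` with `μ < ν < √(c₁/c₂) d` is forward invariant and
keeps `x` inside the ball of radius `d` (since `c₁‖x‖² ≤ W`), and outside it `W` decreases at a
uniform rate, so it is entered in finite time. Inside it, `‖x‖ ≤ √(c₂/c₁) ν`; letting `ν ↓ μ`
gives the bound `√(c₂/c₁) μ = (c₄/c₃) √(c₂/c₁) δ̄`.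
-/

open Filter Set

theorem ContinuousOn.exists_first_hit {f : ℝ → ℝ} {a b y : ℝ} (hab : a ≤ b)
    (hf : ContinuousOn f (Icc a b)) (ha : f a < y) (hb : y ≤ f b) :
    ∃ s ∈ Ioc a b, y ≤ f s ∧ ∀ t ∈ Ico a s, f t < y := by
  set S := Icc a b ∩ f ⁻¹' Ici y
  have hSbdd : BddBelow S := ⟨a, fun t ht => ht.1.1⟩
  have hsS : sInf S ∈ S :=
    (hf.preimage_isClosed_of_isClosed isClosed_Icc isClosed_Ici).csInf_mem
      ⟨b, right_mem_Icc.2 hab, hb⟩ hSbdd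
  refine ⟨sInf S, ⟨hsS.1.1.lt_of_ne ?_, hsS.1.2⟩, hsS.2, fun t ht => ?_⟩
  · rintro has
    exact ha.not_ge (has ▸ hsS.2)
  · by_contra! hyt
    exact ht.2.not_ge (csInf_le hSbdd ⟨⟨ht.1, ht.2.le.trans hsS.1.2⟩, hyt⟩)

theorem image_le_const_of_deriv_neg_at_eq {W w : ℝ → ℝ} {a b L : ℝ}
    (hW : ∀ t ∈ Icc a b, HasDerivAt W (w t) t) (ha : W a ≤ L)
    (hL : ∀ t ∈ Ico a b, W t = L → w t < 0) : ∀ t ∈ Icc a b, W t ≤ L :=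
  image_le_of_deriv_right_lt_deriv_boundary (B := fun _ => L)
    (fun t ht => (hW t ht).continuousAt.continuousWithinAt)
    (fun t ht => (hW t (Ico_subset_Icc_self ht)).hasDerivWithinAt) ha
    (fun _ => hasDerivAt_const _ _) hL

theorem exists_le_of_deriv_le_neg {W w : ℝ → ℝ} {a k L : ℝ} (hk : 0 < k)
    (hW : ∀ t, a ≤ t → HasDerivAt W (w t) t) (hw : ∀ t, a ≤ t → L < W t → w t ≤ -k) :
    ∃ t, a ≤ t ∧ W t ≤ L := by
  by_contra! hgt
  set T := a + (W a - L) / k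
  have hT : a ≤ T := le_add_of_nonneg_right (div_nonneg (sub_nonneg.2 (hgt a le_rfl).le) hk.le)
  have hB : ∀ t, HasDerivAt (fun t => W a - k * (t - a)) (-k) t := fun t => by
    simpa using ((hasDerivAt_id t).sub_const a).const_mul k |>.const_sub (W a)
  have hWT := image_le_of_deriv_right_le_deriv_boundary (B := fun t => W a - k * (t - a))
    (fun t ht => (hW t ht.1).continuousAt.continuousWithinAt)
    (fun t ht => (hW t ht.1).hasDerivWithinAt) (by simp)
    (fun t _ => (hB t).continuousAt.continuousWithinAt) (fun t _ => (hB t).hasDerivWithinAt)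
    (fun t ht => hw t ht.1 (hgt t ht.1)) (right_mem_Icc.2 hT)
  have hBT : W a - k * (T - a) = L := by
    simp only [T]
    field_simp
    ring
  linarith [hgt T hT]

theorem limsup_le_of_forall_pos_eventually_lt {α : Type*} {l : Filter α} [l.NeBot]
    {f : α → ℝ} {a b : ℝ} (hf : ∀ᶠ t in l, a ≤ f t) (h : ∀ ε > 0, ∀ᶠ t in l, f t < b + ε) :
    limsup f l ≤ b :=
  le_of_forall_pos_le_add fun ε hε =>
    limsup_le_of_le (isCoboundedUnder_le_of_eventually_le l hf) ((h ε hε).mono fun _ => le_of_lt)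

theorem mul_sq_lt_of_lt_sqrt_div_mul {a b c d : ℝ} (hb : 0 < b) (hc : 0 < c) (ha : 0 ≤ a)
    (h : a < √(b / c) * d) : c * a ^ 2 < b * d ^ 2 := by
  have hsq : a ^ 2 < b / c * d ^ 2 := by
    simpa [mul_pow, Real.sq_sqrt (div_pos hb hc).le] using pow_lt_pow_left₀ h ha two_ne_zero
  rw [div_mul_eq_mul_div, lt_div_iff₀ hc] at hsq
  linarith

theorem le_sqrt_div_mul_of_mul_sq_le {a b c ν : ℝ} (hc : 0 < c) (hν : 0 ≤ ν)
    (h : c * a ^ 2 ≤ b * ν ^ 2) : a ≤ √(b / c) * ν := by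
  have hsq : a ^ 2 ≤ b / c * ν ^ 2 := by
    rw [div_mul_eq_mul_div, le_div_iff₀ hc]
    linarith
  calc a ≤ |a| := le_abs_self a
    _ ≤ √(b / c * ν ^ 2) := Real.abs_le_sqrt hsq
    _ = √(b / c) * ν := by rw [Real.sqrt_mul' _ (sq_nonneg ν), Real.sqrt_sq hν]

/-- `W t = V t (x t)` along a trajectory with `r t = ‖x t‖`, and `w t` its derivative;
outside radius `μ` the decrease of `V` beats the perturbation. -/
structure LyapunovBounds (W w r : ℝ → ℝ) (c1 c2 c3 μ d : ℝ) : Prop where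
  c1_pos : 0 < c1
  c2_pos : 0 < c2
  c3_pos : 0 < c3
  μ_nonneg : 0 ≤ μ
  hasDerivAt : ∀ t, 0 ≤ t → HasDerivAt W (w t) t
  continuousOn : ContinuousOn r (Ici 0)
  nonneg : ∀ t, 0 ≤ r t
  lower : ∀ t, 0 ≤ t → r t < d → c1 * r t ^ 2 ≤ W t
  upper : ∀ t, 0 ≤ t → r t < d → W t ≤ c2 * r t ^ 2
  deriv_le : ∀ t, 0 ≤ t → r t < d → w t ≤ -c3 * r t * (r t - μ)

namespace LyapunovBounds

variable {W w r : ℝ → ℝ} {c1 c2 c3 μ d ν : ℝ}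

theorem deriv_le_of_le (h : LyapunovBounds W w r c1 c2 c3 μ d) {t : ℝ} (hμν : μ ≤ ν)
    (ht : 0 ≤ t) (hrt : r t < d) (hWt : c2 * ν ^ 2 ≤ W t) : w t ≤ -(c3 * ν * (ν - μ)) := by
  have hν : 0 ≤ ν := h.μ_nonneg.trans hμν
  have hνr : ν ≤ r t := (pow_le_pow_iff_left₀ hν (h.nonneg t) two_ne_zero).1
    (le_of_mul_le_mul_left (hWt.trans (h.upper t ht hrt)) h.c2_pos)
  have hmono : 0 ≤ c3 * ((r t - ν) * (r t + ν - μ)) :=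
    mul_nonneg h.c3_pos.le (mul_nonneg (by linarith) (by linarith))
  linarith [h.deriv_le t ht hrt]

theorem forall_lt_and_le (h : LyapunovBounds W w r c1 c2 c3 μ d) {a : ℝ} (hμν : μ < ν)
    (hνd : c2 * ν ^ 2 < c1 * d ^ 2) (ha : 0 ≤ a) (hra : r a < d) (hWa : W a ≤ c2 * ν ^ 2) :
    ∀ t, a ≤ t → r t < d ∧ W t ≤ c2 * ν ^ 2 := by
  have hneg : ∀ t, a ≤ t → r t < d → W t = c2 * ν ^ 2 → w t < 0 := fun t hat hrt hWt =>
    (h.deriv_le_of_le hμν.le (ha.trans hat) hrt hWt.ge).trans_lt <| neg_neg_of_pos <|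
      mul_pos (mul_pos h.c3_pos (h.μ_nonneg.trans_lt hμν)) (sub_pos.2 hμν)
  have hbarrier : ∀ b, (∀ t ∈ Ico a b, r t < d) → ∀ t ∈ Icc a b, W t ≤ c2 * ν ^ 2 :=
    fun b hb => image_le_const_of_deriv_neg_at_eq
      (fun t ht => h.hasDerivAt t (ha.trans ht.1)) hWa (fun t ht => hneg t ht.1 (hb t ht))
  have hrd : ∀ t, a ≤ t → r t < d := by
    by_contra! ⟨b, hab, hdb⟩
    have hcont : ContinuousOn r (Icc a b) := h.continuousOn.mono fun t ht => ha.trans ht.1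
    obtain ⟨s, hs, hds, hlt⟩ := hcont.exists_first_hit hab hra hdb
    have hsq : ∀ t ∈ Ico a s, c1 * r t ^ 2 ≤ c2 * ν ^ 2 := fun t ht =>
      (h.lower t (ha.trans ht.1) (hlt t ht)).trans (hbarrier s hlt t (Ico_subset_Icc_self ht))
    -- the lower bound on `W` is only available strictly inside the ball, so pass to the limit
    have hrs : c1 * r s ^ 2 ≤ c2 * ν ^ 2 :=
      le_on_closure hsq
        (continuousOn_const.mul ((hcont.mono (Icc_subset_Icc_right hs.2)).pow 2)
          |>.mono (closure_Ico hs.1.ne).subset)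
        continuousOn_const (by rw [closure_Ico hs.1.ne]; exact right_mem_Icc.2 hs.1.le)
    have hd : 0 ≤ d := (h.nonneg a).trans hra.le
    nlinarith [pow_le_pow_left₀ hd hds 2, h.c1_pos]
  exact fun t hat => ⟨hrd t hat, hbarrier t (fun u hu => hrd u hu.1) t (right_mem_Icc.2 hat)⟩

theorem exists_le (h : LyapunovBounds W w r c1 c2 c3 μ d) (hμν : μ < ν)
    (hrd : ∀ t, 0 ≤ t → r t < d) : ∃ t, 0 ≤ t ∧ W t ≤ c2 * ν ^ 2 :=
  exists_le_of_deriv_le_neg (mul_pos (mul_pos h.c3_pos (h.μ_nonneg.trans_lt hμν)) (sub_pos.2 hμν))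
    h.hasDerivAt fun t ht hWt => h.deriv_le_of_le hμν.le ht (hrd t ht) hWt.le

theorem eventually_le (h : LyapunovBounds W w r c1 c2 c3 μ d) (hμν : μ < ν)
    (hνd : ν < √(c1 / c2) * d) (hr0 : r 0 < d) (hr0d : r 0 < √(c1 / c2) * d) :
    ∀ᶠ t in atTop, r t ≤ √(c2 / c1) * ν := by
  have hν : 0 ≤ ν := h.μ_nonneg.trans hμν.le
  -- the sublevel set through the initial point is invariant, so the trajectory never leaves the ball
  have hrd : ∀ t, 0 ≤ t → r t < d := by
    set ν₀ := max (r 0) ν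
    have hν₀d : c2 * ν₀ ^ 2 < c1 * d ^ 2 :=
      mul_sq_lt_of_lt_sqrt_div_mul h.c1_pos h.c2_pos (hν.trans (le_max_right _ _))
        (max_lt hr0d hνd)
    have hW0 : W 0 ≤ c2 * ν₀ ^ 2 := (h.upper 0 le_rfl hr0).trans <|
      mul_le_mul_of_nonneg_left (pow_le_pow_left₀ (h.nonneg 0) (le_max_left _ _) 2) h.c2_pos.le
    exact fun t ht => (h.forall_lt_and_le (hμν.trans_le (le_max_right _ _)) hν₀d le_rfl hr0 hW0
      t ht).1
  obtain ⟨t₀, ht₀, hWt₀⟩ := h.exists_le hμν hrd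
  have hνd' := mul_sq_lt_of_lt_sqrt_div_mul h.c1_pos h.c2_pos hν hνd
  filter_upwards [eventually_ge_atTop t₀] with t ht
  exact le_sqrt_div_mul_of_mul_sq_le h.c1_pos hν <|
    (h.lower t (ht₀.trans ht) (hrd t (ht₀.trans ht))).trans
      (h.forall_lt_and_le hμν hνd' ht₀ (hrd t₀ ht₀) hWt₀ t ht).2

end LyapunovBounds

section NormedSpace

variable {E : Type*} [NormedAddCommGroup E] [NormedSpace ℝ E]

theorem HasFDerivAt.hasDerivAt_comp_prodMk {V : ℝ → E → ℝ} {Vt : ℝ} {Vx : E →L[ℝ] ℝ}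
    {x : ℝ → E} {v : E} {t : ℝ}
    (hV : HasFDerivAt (fun q : ℝ × E => V q.1 q.2)
      (Vt • ContinuousLinearMap.fst ℝ ℝ E + Vx.comp (ContinuousLinearMap.snd ℝ ℝ E)) (t, x t))
    (hx : HasDerivAt x v t) : HasDerivAt (fun s => V s (x s)) (Vt + Vx v) t := by
  have := hV.comp_hasDerivAt t ((hasDerivAt_id t).prodMk hx)
  simp only [id_eq, add_apply, smul_apply, ContinuousLinearMap.coe_fst', smul_eq_mul, mul_one,
    ContinuousLinearMap.comp_apply, ContinuousLinearMap.coe_snd'] at this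
  exact this

theorem add_apply_add_le_of_norm_le {Vt : ℝ} {Vx : E →L[ℝ] ℝ} {f q : E} {c3 c4 r δ : ℝ}
    (hc3 : 0 < c3) (hf : Vt + Vx f ≤ -c3 * r ^ 2) (hVx : ‖Vx‖ ≤ c4 * r) (hq : ‖q‖ ≤ δ) :
    Vt + Vx (f + q) ≤ -c3 * r * (r - c4 * δ / c3) := by
  have hVxq : Vx q ≤ c4 * r * δ :=
    (Real.le_norm_self _).trans <| (Vx.le_opNorm q).trans <|
      mul_le_mul hVx hq (norm_nonneg _) ((norm_nonneg _).trans hVx)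
  have hrhs : -c3 * r * (r - c4 * δ / c3) = -c3 * r ^ 2 + c4 * r * δ := by
    field_simp
    ring
  rw [map_add, hrhs]
  linarith

theorem norm_lt_of_lt_sqrt_div_mul {f : E → ℝ} {c1 c2 d : ℝ} (hc2 : 0 < c2) (hd : 0 < d)
    (hlb : ∀ y : E, ‖y‖ < d → c1 * ‖y‖ ^ 2 ≤ f y) (hub : ∀ y : E, ‖y‖ < d → f y ≤ c2 * ‖y‖ ^ 2)
    {x : E} (hx : ‖x‖ < √(c1 / c2) * d) : ‖x‖ < d := by
  by_contra! hdx
  have : Nontrivial E := nontrivial_of_ne x 0 (norm_pos_iff.1 (hd.trans_le hdx))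
  obtain ⟨y, hy⟩ := exists_norm_eq E (half_pos hd).le
  have hyd : ‖y‖ < d := by linarith
  have hc12 : c1 ≤ c2 := le_of_mul_le_mul_right ((hlb y hyd).trans (hub y hyd))
    (by rw [hy]; positivity)
  have hsqrt : √(c1 / c2) ≤ 1 := Real.sqrt_le_one.2 ((div_le_one hc2).2 hc12)
  nlinarith

theorem lyapunovBounds_of_hasDerivAt {h0 p : ℝ → E → E} {V Vt : ℝ → E → ℝ}
    {Vx : ℝ → E → E →L[ℝ] ℝ}
    (hV' : ∀ (t : ℝ) (x : E), HasFDerivAt (fun q : ℝ × E => V q.1 q.2)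
      ((Vt t x) • (ContinuousLinearMap.fst ℝ ℝ E)
        + (Vx t x).comp (ContinuousLinearMap.snd ℝ ℝ E)) (t, x))
    {c1 c2 c3 c4 d δ : ℝ} (hc1 : 0 < c1) (hc2 : 0 < c2) (hc3 : 0 < c3) (hc4 : 0 < c4)
    (hVlb : ∀ t x, ‖x‖ < d → c1 * ‖x‖ ^ 2 ≤ V t x)
    (hVub : ∀ t x, ‖x‖ < d → V t x ≤ c2 * ‖x‖ ^ 2)
    (hVdec : ∀ t x, 0 ≤ t → ‖x‖ < d → Vt t x + Vx t x (h0 t x) ≤ -c3 * ‖x‖ ^ 2)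
    (hVgrad : ∀ t x, 0 ≤ t → ‖x‖ < d → ‖Vx t x‖ ≤ c4 * ‖x‖)
    (hpbound : ∀ t x, 0 ≤ t → ‖x‖ < d → ‖p t x‖ ≤ δ) (hδ : 0 ≤ δ)
    {x : ℝ → E} (hx : ∀ t, 0 ≤ t → HasDerivAt x (h0 t (x t) + p t (x t)) t) :
    LyapunovBounds (fun t => V t (x t))
      (fun t => Vt t (x t) + Vx t (x t) (h0 t (x t) + p t (x t))) (fun t => ‖x t‖)
      c1 c2 c3 (c4 * δ / c3) d where
  c1_pos := hc1
  c2_pos := hc2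
  c3_pos := hc3
  μ_nonneg := by positivity
  hasDerivAt t ht := (hV' t (x t)).hasDerivAt_comp_prodMk (hx t ht)
  continuousOn t ht := (hx t ht).continuousAt.norm.continuousWithinAt
  nonneg t := norm_nonneg _
  lower t _ := hVlb t (x t)
  upper t _ := hVub t (x t)
  deriv_le t ht hxt := add_apply_add_le_of_norm_le hc3 (hVdec t _ ht hxt) (hVgrad t _ ht hxt)
    (hpbound t _ ht hxt)

end NormedSpace

theorem stmt_18_general {n : ℕ}
    (h0 p : ℝ → EuclideanSpace ℝ (Fin n) → EuclideanSpace ℝ (Fin n))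
    (V : ℝ → EuclideanSpace ℝ (Fin n) → ℝ)
    (Vt : ℝ → EuclideanSpace ℝ (Fin n) → ℝ)
    (Vx : ℝ → EuclideanSpace ℝ (Fin n) → (EuclideanSpace ℝ (Fin n) →L[ℝ] ℝ))
    (hV' : ∀ (t : ℝ) (x : EuclideanSpace ℝ (Fin n)),
      HasFDerivAt (fun q : ℝ × EuclideanSpace ℝ (Fin n) => V q.1 q.2)
        ((Vt t x) • (ContinuousLinearMap.fst ℝ ℝ (EuclideanSpace ℝ (Fin n)))
          + (Vx t x).comp (ContinuousLinearMap.snd ℝ ℝ (EuclideanSpace ℝ (Fin n)))) (t, x))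
    (c1 c2 c3 c4 d δbar : ℝ)
    (hc1 : 0 < c1) (hc2 : 0 < c2) (hc3 : 0 < c3) (hc4 : 0 < c4) (hd : 0 < d)
    (hVlb : ∀ t x, ‖x‖ < d → c1 * ‖x‖ ^ 2 ≤ V t x)
    (hVub : ∀ t x, ‖x‖ < d → V t x ≤ c2 * ‖x‖ ^ 2)
    (hVdec : ∀ t x, 0 ≤ t → ‖x‖ < d → Vt t x + Vx t x (h0 t x) ≤ -c3 * ‖x‖ ^ 2)
    (hVgrad : ∀ t x, 0 ≤ t → ‖x‖ < d → ‖Vx t x‖ ≤ c4 * ‖x‖)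
    (hpbound : ∀ t x, 0 ≤ t → ‖x‖ < d → ‖p t x‖ ≤ δbar)
    (hδbar : 0 ≤ δbar ∧ δbar < (c3 / c4) * Real.sqrt (c1 / c2) * d) :
    ∀ x : ℝ → EuclideanSpace ℝ (Fin n),
      (∀ t, 0 ≤ t → HasDerivAt x (h0 t (x t) + p t (x t)) t) →
      ‖x 0‖ < Real.sqrt (c1 / c2) * d →
      (Filter.limsup (fun t => ‖x t‖) Filter.atTop
          ≤ (c4 / c3) * Real.sqrt (c2 / c1) * δbar) ∧
        ∀ ρ' > (0 : ℝ), ∃ T > (0 : ℝ), ∀ t ≥ T,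
          ‖x t‖ < (c4 / c3) * Real.sqrt (c2 / c1) * δbar + ρ' := by
  intro x hx hx0
  obtain ⟨hδ0, hδlt⟩ := hδbar
  have hest := lyapunovBounds_of_hasDerivAt hV' hc1 hc2 hc3 hc4 hVlb hVub hVdec hVgrad hpbound
    hδ0 hx
  have hμ : c4 * δbar / c3 < √(c1 / c2) * d := by
    rw [div_lt_iff₀ hc3]
    calc c4 * δbar < c4 * (c3 / c4 * √(c1 / c2) * d) := mul_lt_mul_of_pos_left hδlt hc4
      _ = √(c1 / c2) * d * c3 := by field_simp
  have hx0d := norm_lt_of_lt_sqrt_div_mul hc2 hd (hVlb 0) (hVub 0) hx0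
  have hκ : 0 < √(c2 / c1) := Real.sqrt_pos.2 (div_pos hc2 hc1)
  have key : ∀ ρ' > 0, ∀ᶠ t in atTop, ‖x t‖ < (c4 / c3) * √(c2 / c1) * δbar + ρ' := by
    intro ρ' hρ'
    obtain ⟨ν, hμν, hν⟩ := exists_between (lt_min hμ (lt_add_of_pos_right _ (div_pos hρ' hκ)))
    filter_upwards [hest.eventually_le hμν (hν.trans_le (min_le_left _ _)) hx0d hx0] with t ht
    calc ‖x t‖ ≤ √(c2 / c1) * ν := ht
      _ < √(c2 / c1) * (c4 * δbar / c3 + ρ' / √(c2 / c1)) :=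
        mul_lt_mul_of_pos_left (hν.trans_le (min_le_right _ _)) hκ
      _ = (c4 / c3) * √(c2 / c1) * δbar + ρ' := by field_simp
  refine ⟨limsup_le_of_forall_pos_eventually_lt (.of_forall fun t => norm_nonneg _) key,
    fun ρ' hρ' => ?_⟩
  obtain ⟨T, hT⟩ := eventually_atTop.1 (key ρ' hρ')
  exact ⟨max T 1, by positivity, fun t ht => hT t (le_of_max_le_left ht)⟩

theorem stmt_18 {n : ℕ}
    (h0 p : ℝ → EuclideanSpace ℝ (Fin n) → EuclideanSpace ℝ (Fin n))
    (hh0 : Continuous fun q : ℝ × EuclideanSpace ℝ (Fin n) => h0 q.1 q.2)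
    (hp : Continuous fun q : ℝ × EuclideanSpace ℝ (Fin n) => p q.1 q.2)
    (V : ℝ → EuclideanSpace ℝ (Fin n) → ℝ)
    (Vt : ℝ → EuclideanSpace ℝ (Fin n) → ℝ)
    (Vx : ℝ → EuclideanSpace ℝ (Fin n) → (EuclideanSpace ℝ (Fin n) →L[ℝ] ℝ))
    (hV' : ∀ (t : ℝ) (x : EuclideanSpace ℝ (Fin n)),
      HasFDerivAt (fun q : ℝ × EuclideanSpace ℝ (Fin n) => V q.1 q.2)
        ((Vt t x) • (ContinuousLinearMap.fst ℝ ℝ (EuclideanSpace ℝ (Fin n)))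
          + (Vx t x).comp (ContinuousLinearMap.snd ℝ ℝ (EuclideanSpace ℝ (Fin n)))) (t, x))
    (c1 c2 c3 c4 d δbar : ℝ)
    (hc1 : 0 < c1) (hc2 : 0 < c2) (hc3 : 0 < c3) (hc4 : 0 < c4) (hd : 0 < d)
    (hVlb : ∀ t x, ‖x‖ < d → c1 * ‖x‖ ^ 2 ≤ V t x)
    (hVub : ∀ t x, ‖x‖ < d → V t x ≤ c2 * ‖x‖ ^ 2)
    (hVdec : ∀ t x, 0 ≤ t → ‖x‖ < d → Vt t x + Vx t x (h0 t x) ≤ -c3 * ‖x‖ ^ 2)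
    (hVgrad : ∀ t x, 0 ≤ t → ‖x‖ < d → ‖Vx t x‖ ≤ c4 * ‖x‖)
    (hpbound : ∀ t x, 0 ≤ t → ‖x‖ < d → ‖p t x‖ ≤ δbar)
    (hδbar : 0 ≤ δbar ∧ δbar < (c3 / c4) * Real.sqrt (c1 / c2) * d) :
    ∀ x : ℝ → EuclideanSpace ℝ (Fin n),
      (∀ t, 0 ≤ t → HasDerivAt x (h0 t (x t) + p t (x t)) t) →
      ‖x 0‖ < Real.sqrt (c1 / c2) * d →
      (Filter.limsup (fun t => ‖x t‖) Filter.atTop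
          ≤ (c4 / c3) * Real.sqrt (c2 / c1) * δbar) ∧
        ∀ ρ' > (0 : ℝ), ∃ T > (0 : ℝ), ∀ t ≥ T,
          ‖x t‖ < (c4 / c3) * Real.sqrt (c2 / c1) * δbar + ρ' :=
  stmt_18_general h0 p V Vt Vx hV' c1 c2 c3 c4 d δbar hc1 hc2 hc3 hc4 hd hVlb hVub hVdec hVgrad
    hpbound hδbar
end
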